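/- For q ≥ 1/2, the maximum of the doubling index over all (m+1)-colored rooted trees of order at most q equals ⌊log₂(q + 1/2)⌋ + 1: max{𝔡(τ) : τ ∈ T, ρ(τ) ≤ q} = ⌊log₂(q+1/2)⌋ + 1, where m ≥ 1. -/

import Mathlib

inductive CTree (m : ℕ) : Type
  | node : Fin (m + 1) → List (CTree m) → CTree m

namespace CTree

variable {m : ℕ}

def rho : CTree m → ℚ
  | .node l ts => (if (l : ℕ) = 0 then 1 else 1/2) + (ts.attach.map (fun t => rho t.1)).sum
decreasing_by
  all_goals try simp only [CTree.node.sizeOf_spec, List.cons.sizeOf_spec, List.nil.sizeOf_spec]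
  all_goals try have := List.sizeOf_lt_of_mem t.2
  all_goals omega

def height : CTree m → ℕ
  | .node _ ts => 1 + (ts.attach.map (fun t => height t.1)).foldr max 0
decreasing_by
  all_goals try simp only [CTree.node.sizeOf_spec, List.cons.sizeOf_spec, List.nil.sizeOf_spec]
  all_goals try have := List.sizeOf_lt_of_mem t.2
  all_goals omega

def ram : CTree m → ℕ
  | .node _ [] => 1
  | .node _ [t] => ram t
  | .node _ ts => 1 + (ts.attach.map (fun t => ram t.1)).foldr max 0
decreasing_by
  all_goals try simp only [CTree.node.sizeOf_spec, List.cons.sizeOf_spec, List.nil.sizeOf_spec]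
  all_goals try have := List.sizeOf_lt_of_mem t.2
  all_goals omega

def dbl : CTree m → ℕ
  | .node _ [] => 1
  | .node _ ts =>
      let ds := ts.attach.map (fun t => dbl t.1)
      let M := ds.foldr max 0
      if 2 ≤ ds.count M then M + 1 else M
decreasing_by
  all_goals try simp only [CTree.node.sizeOf_spec, List.cons.sizeOf_spec, List.nil.sizeOf_spec]
  all_goals try have := List.sizeOf_lt_of_mem t.2
  all_goals omega


end CTree

/-
Every tree satisfies `2 ^ 𝔡(τ) ≤ 2 ρ(τ) + 1`, by induction: if at least two children attain the
maximal index `M`, each has order at least `(2 ^ M - 1) / 2` and the root adds at least `1/2`,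
giving `2 ^ (M + 1) ≤ 2 ρ(τ) + 1`; otherwise one child of index `M` already suffices. Equality
holds for the perfect binary tree of height `k` whose nodes all have a nonzero color: its order is
`2 ^ k - 1/2` and its doubling index `k + 1`. Hence the maximum is the largest `d` with
`2 ^ (d - 1) ≤ q + 1/2`.
-/

theorem List.exists_pair_sublist_of_two_le_count_map {α β : Type*} [BEq β] [LawfulBEq β]
    {f : α → β} {l : List α} {b : β} (h : 2 ≤ (l.map f).count b) :
    ∃ x y, [x, y].Sublist l ∧ f x = b ∧ f y = b := by
  obtain ⟨l', hsub, hl'⟩ := List.sublist_map_iff.mp (List.replicate_sublist_iff.mpr h)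
  rcases l' with _ | ⟨x, _ | ⟨y, _ | ⟨_, _⟩⟩⟩ <;> simp [List.replicate] at hl'
  exact ⟨x, y, hsub, hl'.1.symm, hl'.2.symm⟩

theorem List.foldr_max_mem_of_ne_nil {l : List ℕ} (hl : l ≠ []) : l.foldr max 0 ∈ l :=
  List.maximum_mem (List.foldr_max_of_ne_nil hl).symm

namespace CTree

variable {m : ℕ}

theorem induction {P : CTree m → Prop}
    (node : ∀ l ts, (∀ t ∈ ts, P t) → P (node l ts)) : ∀ τ, P τ
  | .node l ts => node l ts fun t _ => induction node t
decreasing_by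
  simp only [CTree.node.sizeOf_spec]
  have := List.sizeOf_lt_of_mem ‹t ∈ ts›
  omega

theorem rho_node (l : Fin (m + 1)) (ts : List (CTree m)) :
    rho (node l ts) = (if (l : ℕ) = 0 then 1 else 1/2) + (ts.map rho).sum := by
  rw [rho, List.map_attach_eq_pmap, List.pmap_eq_map]

theorem rho_node_of_ne_zero {l : Fin (m + 1)} (hl : (l : ℕ) ≠ 0) (ts : List (CTree m)) :
    rho (node l ts) = 1/2 + (ts.map rho).sum := by
  rw [rho_node, if_neg hl]

theorem half_add_sum_le_rho (l : Fin (m + 1)) (ts : List (CTree m)) :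
    1/2 + (ts.map rho).sum ≤ rho (node l ts) := by
  rw [rho_node]
  gcongr
  split_ifs <;> norm_num

theorem half_le_rho : ∀ τ : CTree m, 1/2 ≤ rho τ :=
  induction fun l ts ih => by
    have : 0 ≤ (ts.map rho).sum :=
      List.sum_nonneg (by simpa using fun t ht => (ih t ht).trans' (by norm_num))
    linarith [half_add_sum_le_rho l ts]

theorem dbl_node_nil (l : Fin (m + 1)) : dbl (node l []) = 1 := by
  rw [dbl]

theorem dbl_node {ts : List (CTree m)} (hts : ts ≠ []) (l : Fin (m + 1)) :
    dbl (node l ts) =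
      if 2 ≤ (ts.map dbl).count ((ts.map dbl).foldr max 0) then (ts.map dbl).foldr max 0 + 1
      else (ts.map dbl).foldr max 0 := by
  obtain ⟨t, ts, rfl⟩ := List.exists_cons_of_ne_nil hts
  rw [dbl, List.map_attach_eq_pmap, List.pmap_eq_map]
  exact List.cons_ne_nil t ts

theorem dbl_node_pair (l : Fin (m + 1)) (t : CTree m) : dbl (node l [t, t]) = dbl t + 1 := by
  simp [dbl_node]

theorem two_pow_dbl_le (τ : CTree m) : 2 ^ dbl τ ≤ 2 * rho τ + 1 := by
  induction τ using induction with
  | node l ts ih =>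
  have hroot := half_add_sum_le_rho l ts
  rcases eq_or_ne ts [] with rfl | hts
  · rw [dbl_node_nil]
    norm_num at hroot ⊢
    linarith
  have hsum_le {ss : List (CTree m)} (h : ss.Sublist ts) : (ss.map rho).sum ≤ (ts.map rho).sum :=
    (h.map rho).sum_le_sum (by simpa using fun t _ => (half_le_rho t).trans' (by norm_num))
  set M := (ts.map dbl).foldr max 0
  rw [dbl_node hts]
  split_ifs with hcount
  · obtain ⟨s₁, s₂, hsub, hs₁, hs₂⟩ := List.exists_pair_sublist_of_two_le_count_map hcount
    have h₁ := ih s₁ (hsub.subset (by simp))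
    have h₂ := ih s₂ (hsub.subset (by simp))
    have := hsum_le hsub
    rw [hs₁] at h₁
    rw [hs₂] at h₂
    simp only [List.map_cons, List.map_nil, List.sum_cons, List.sum_nil] at this
    rw [pow_succ]
    linarith
  · obtain ⟨s, hs, hsM⟩ : ∃ s ∈ ts, dbl s = M :=
      List.mem_map.mp (List.foldr_max_mem_of_ne_nil (by simpa using hts))
    have h := ih s hs
    have := hsum_le (List.singleton_sublist.mpr hs)
    rw [hsM] at h
    simp only [List.map_cons, List.map_nil, List.sum_cons, List.sum_nil] at this
    linarith

def fullBinary (m : ℕ) : ℕ → CTree m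
  | 0 => node (Fin.last m) []
  | k + 1 => node (Fin.last m) [fullBinary m k, fullBinary m k]

theorem rho_fullBinary (hm : m ≠ 0) (k : ℕ) : rho (fullBinary m k) = 2 ^ k - 1/2 := by
  induction k with
  | zero =>
    rw [fullBinary, rho_node_of_ne_zero (by simpa using hm)]
    norm_num
  | succ k ih =>
    rw [fullBinary, rho_node_of_ne_zero (by simpa using hm)]
    simp only [List.map_cons, List.map_nil, List.sum_cons, List.sum_nil, ih]
    ring

theorem dbl_fullBinary (k : ℕ) : dbl (fullBinary m k) = k + 1 := by
  induction k with
  | zero => rw [fullBinary, dbl_node_nil]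
  | succ k ih => rw [fullBinary, dbl_node_pair, ih]

end CTree

theorem Real.floor_logb_two {x : ℝ} (hx : 0 ≤ x) : ⌊Real.logb 2 x⌋ = Int.log 2 x := by
  exact_mod_cast Real.floor_logb_natCast (b := 2) hx

theorem two_pow_le_two_mul_add_one_iff {q : ℚ} (hq : 0 < q + 1/2) (k : ℕ) :
    (2 : ℚ) ^ k ≤ 2 * q + 1 ↔ (k : ℤ) ≤ Int.log 2 ((q : ℝ) + 1/2) + 1 := by
  have hx : (0 : ℝ) < q + 1/2 := by rify at hq; exact hq
  have hlog := Int.zpow_le_iff_le_log (b := 2) one_lt_two hx (x := (k : ℤ) - 1)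
  rw [Nat.cast_ofNat, zpow_sub₀ two_ne_zero, zpow_one, zpow_natCast, div_le_iff₀ two_pos,
    sub_le_iff_le_add] at hlog
  rw [← hlog, ← Rat.cast_le (K := ℝ)]
  push_cast
  constructor <;> intro h <;> linarith

open CTree in
theorem stmt5 (m : ℕ) (hm : 1 ≤ m) (q : ℚ) (hq : 1/2 ≤ q) :
    IsGreatest {k : ℕ | ∃ τ : CTree m, rho τ ≤ q ∧ dbl τ = k}
      ((⌊Real.logb 2 ((q : ℝ) + 1/2)⌋ + 1).toNat) := by
  have hq' : 0 < q + 1/2 := by linarith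
  rw [Real.floor_logb_two (by rify at hq'; exact hq'.le)]
  obtain ⟨n, hn⟩ : ∃ n : ℕ, Int.log 2 ((q : ℝ) + 1/2) = n := by
    have := (two_pow_le_two_mul_add_one_iff hq' 1).mp (by linarith)
    exact Int.eq_ofNat_of_zero_le (by omega)
  rw [hn, show ((n : ℤ) + 1).toNat = n + 1 by omega]
  refine ⟨⟨fullBinary m n, ?_, dbl_fullBinary n⟩, ?_⟩
  · have := (two_pow_le_two_mul_add_one_iff hq' (n + 1)).mpr (by rw [hn]; omega)
    rw [pow_succ] at this
    rw [rho_fullBinary (by omega)]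
    linarith
  · rintro _ ⟨τ, hτ, rfl⟩
    have := (two_pow_le_two_mul_add_one_iff hq' (dbl τ)).mp (by linarith [two_pow_dbl_le τ])
    omega
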